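/- arXiv:1702.07629 — 5 statements merged into one kernel-verified Lean document; each statement's English description precedes it below -/
import Mathlib

section
/- Let A be a unital complex Banach algebra, M a unital A-bimodule, and n ≥ 2. For every 2-local derivation Δ from M_n(A) into M_n(M) there exists a derivation D from M_n(A) into M_n(M) such that Δ(t) = D(t) for every t in the linear span of the matrix units {e_{ij}}_{i,j=1}^n. -/
open MulOpposite Matrix

variable (A M : Type*) [NormedRing A] [NormedAlgebra ℂ A] [CompleteSpace A]
  [AddCommGroup M] [Module ℂ M] [Module A M] [Module Aᵐᵒᵖ M]
  [SMulCommClass A Aᵐᵒᵖ M] [IsScalarTower ℂ A M] [IsScalarTower ℂ Aᵐᵒᵖ M]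

/-- `D : A → M` is a derivation from the Banach algebra `A` into the unital
`A`-bimodule `M`: a `ℂ`-linear map with the Leibniz rule (the right action of
`A` on `M` is written via `Aᵐᵒᵖ`). -/
def IsDerivation (D : A → M) : Prop :=
  IsLinearMap ℂ D ∧ ∀ x y : A, D (x * y) = op y • D x + x • D y

variable {n : ℕ}

/-- The left action of `Mₙ(A)` on `Mₙ(M)`: `(x · Y)_{ij} = Σ_k x_{ik} · Y_{kj}`. -/
def matL (x : Matrix (Fin n) (Fin n) A) (Y : Matrix (Fin n) (Fin n) M) :
    Matrix (Fin n) (Fin n) M :=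
  Matrix.of fun i j => ∑ k, x i k • Y k j

/-- The right action of `Mₙ(A)` on `Mₙ(M)`: `(Y · x)_{ij} = Σ_k Y_{ik} · x_{kj}`. -/
def matR (Y : Matrix (Fin n) (Fin n) M) (x : Matrix (Fin n) (Fin n) A) :
    Matrix (Fin n) (Fin n) M :=
  Matrix.of fun i j => ∑ k, op (x k j) • Y i k

/-- A derivation from `Mₙ(A)` into the `Mₙ(A)`-bimodule `Mₙ(M)`. -/
def IsMatDerivation (D : Matrix (Fin n) (Fin n) A → Matrix (Fin n) (Fin n) M) : Prop :=
  IsLinearMap ℂ D ∧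
    ∀ x y : Matrix (Fin n) (Fin n) A, D (x * y) = matR A M (D x) y + matL A M x (D y)

/-- A 2-local derivation from `Mₙ(A)` into `Mₙ(M)`: for each pair of points there
is a derivation agreeing with `Δ` at both of them. -/
def Is2LocalMatDerivation (Δ : Matrix (Fin n) (Fin n) A → Matrix (Fin n) (Fin n) M) : Prop :=
  ∀ x y : Matrix (Fin n) (Fin n) A,
    ∃ D : Matrix (Fin n) (Fin n) A → Matrix (Fin n) (Fin n) M,
      IsMatDerivation A M D ∧ Δ x = D x ∧ Δ y = D y

/-- The matrix unit `e_{ij}`: the unit of `A` at position `(i,j)`, zeros elsewhere. -/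
def matUnit (i j : Fin n) : Matrix (Fin n) (Fin n) A :=
  Matrix.single i j 1

/-- The linear span of the matrix units `{e_{ij}}`. -/
noncomputable def unitSpan (n : ℕ) : Submodule ℂ (Matrix (Fin n) (Fin n) A) :=
  Submodule.span ℂ (Set.range fun p : Fin n × Fin n => Matrix.single p.1 p.2 (1 : A))

/-- The set `Dₙ(A)` of diagonal matrices in `Mₙ(A)`. -/
def diagSet (n : ℕ) : Set (Matrix (Fin n) (Fin n) A) :=
  {x | ∀ i j : Fin n, i ≠ j → x i j = 0}

/-!
For a derivation `D`, one application of the Leibniz rule to `e_pq · e_jz` (`z` a fixed index)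
shows that `D` agrees on the matrix units with the inner derivation `ad b`,
`b_ij = D(e_jz)_iz`. Hence the trace of `D` vanishes on `span {e_ij}`, and the Leibniz rule
for `x · e_ji` gives `D(x)_ij = -tr (x · D(e_ji))` for `x` in the span. This identity involves
`D` at two points only, so it holds for a 2-local derivation `Δ` as well: on the span, `Δ` is
determined by its values at the matrix units. Comparing `Δ` with inner derivations at pairs
of matrix units, and at the pair `e_pq + e_qr`, `e_pr` for the diagonal entries, shows that
`Δ(e_pq) = ad a (e_pq)` for the single matrix `a_ij = Δ(e_jz)_iz`.
-/

section

variable {A M : Type*} [NormedRing A] [AddCommGroup M] {n : ℕ}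

theorem matL_add_left [Module A M] (x y : Matrix (Fin n) (Fin n) A)
    (Y : Matrix (Fin n) (Fin n) M) : matL A M (x + y) Y = matL A M x Y + matL A M y Y := by
  ext i j
  simp [matL, add_smul, Finset.sum_add_distrib]

theorem matL_smul_left [NormedAlgebra ℂ A] [Module ℂ M] [Module A M] [IsScalarTower ℂ A M]
    (c : ℂ) (x : Matrix (Fin n) (Fin n) A) (Y : Matrix (Fin n) (Fin n) M) :
    matL A M (c • x) Y = c • matL A M x Y := by
  ext i j
  simp [matL, smul_assoc, Finset.smul_sum]

theorem matL_sub_right [Module A M] (x : Matrix (Fin n) (Fin n) A)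
    (Y Z : Matrix (Fin n) (Fin n) M) : matL A M x (Y - Z) = matL A M x Y - matL A M x Z := by
  ext i j
  simp [matL, smul_sub, Finset.sum_sub_distrib]

theorem matR_add_right [Module Aᵐᵒᵖ M] (Y : Matrix (Fin n) (Fin n) M)
    (x y : Matrix (Fin n) (Fin n) A) : matR A M Y (x + y) = matR A M Y x + matR A M Y y := by
  ext i j
  simp [matR, add_smul, Finset.sum_add_distrib]

theorem matR_smul_right [NormedAlgebra ℂ A] [Module ℂ M] [Module Aᵐᵒᵖ M]
    [IsScalarTower ℂ Aᵐᵒᵖ M] (c : ℂ) (Y : Matrix (Fin n) (Fin n) M)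
    (x : Matrix (Fin n) (Fin n) A) : matR A M Y (c • x) = c • matR A M Y x := by
  ext i j
  simp [matR, op_smul, smul_assoc, Finset.smul_sum]

theorem matR_sub_left [Module Aᵐᵒᵖ M] (Y Z : Matrix (Fin n) (Fin n) M)
    (x : Matrix (Fin n) (Fin n) A) : matR A M (Y - Z) x = matR A M Y x - matR A M Z x := by
  ext i j
  simp [matR, smul_sub, Finset.sum_sub_distrib]

theorem matL_mul [Module A M] (x y : Matrix (Fin n) (Fin n) A) (Y : Matrix (Fin n) (Fin n) M) :
    matL A M (x * y) Y = matL A M x (matL A M y Y) := by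
  ext i j
  simp only [matL, Matrix.of_apply, Matrix.mul_apply, Finset.sum_smul, Finset.smul_sum, mul_smul]
  exact Finset.sum_comm

theorem matR_matR [Module Aᵐᵒᵖ M] (Y : Matrix (Fin n) (Fin n) M)
    (x y : Matrix (Fin n) (Fin n) A) : matR A M (matR A M Y x) y = matR A M Y (x * y) := by
  ext i j
  simp only [matR, Matrix.of_apply, Matrix.mul_apply, Finset.op_sum, op_mul, Finset.sum_smul,
    Finset.smul_sum, mul_smul]
  exact Finset.sum_comm

theorem matL_matR [Module A M] [Module Aᵐᵒᵖ M] [SMulCommClass A Aᵐᵒᵖ M]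
    (x : Matrix (Fin n) (Fin n) A) (Y : Matrix (Fin n) (Fin n) M) (y : Matrix (Fin n) (Fin n) A) :
    matL A M x (matR A M Y y) = matR A M (matL A M x Y) y := by
  ext i j
  simp only [matL, matR, Matrix.of_apply, Finset.smul_sum, smul_comm (x _ _)]
  exact Finset.sum_comm

@[simp]
theorem matL_matUnit_apply [Module A M] (p q : Fin n) (Y : Matrix (Fin n) (Fin n) M)
    (i j : Fin n) : matL A M (matUnit A p q) Y i j = if i = p then Y q j else 0 := by
  by_cases h : i = p <;> simp [matL, matUnit, Matrix.single_apply, h, Ne.symm]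

@[simp]
theorem matR_matUnit_apply [Module Aᵐᵒᵖ M] (Y : Matrix (Fin n) (Fin n) M) (p q : Fin n)
    (i j : Fin n) : matR A M Y (matUnit A p q) i j = if j = q then Y i p else 0 := by
  by_cases h : j = q <;> simp [matR, matUnit, Matrix.single_apply, h, Ne.symm, apply_ite op]

theorem matUnit_mul_matUnit (p q r s : Fin n) :
    matUnit A p q * matUnit A r s = if q = r then matUnit A p s else 0 := by
  split_ifs with h
  · simp [matUnit, h]
  · exact Matrix.single_mul_single_of_ne 1 p q r h 1

theorem matUnit_mem_unitSpan [NormedAlgebra ℂ A] (p q : Fin n) : matUnit A p q ∈ unitSpan A n :=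
  Submodule.subset_span ⟨(p, q), rfl⟩

theorem mul_matUnit_mem_unitSpan [NormedAlgebra ℂ A] {t : Matrix (Fin n) (Fin n) A}
    (ht : t ∈ unitSpan A n) (p q : Fin n) : t * matUnit A p q ∈ unitSpan A n := by
  refine (Submodule.span_le (p := (unitSpan A n).comap (LinearMap.mulRight ℂ (matUnit A p q)))).2
    ?_ ht
  rintro _ ⟨⟨r, s⟩, rfl⟩
  change matUnit A r s * matUnit A p q ∈ unitSpan A n
  rw [matUnit_mul_matUnit]
  split_ifs
  · exact matUnit_mem_unitSpan r q
  · exact zero_mem _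

theorem trace_matR_matUnit [Module Aᵐᵒᵖ M] (Y : Matrix (Fin n) (Fin n) M) (i j : Fin n) :
    (matR A M Y (matUnit A j i)).trace = Y i j := by
  simp [Matrix.trace]

variable [Module A M] [Module Aᵐᵒᵖ M]

def matAd (a : Matrix (Fin n) (Fin n) M) (x : Matrix (Fin n) (Fin n) A) :
    Matrix (Fin n) (Fin n) M :=
  matR A M a x - matL A M x a

theorem matAd_matUnit_apply (a : Matrix (Fin n) (Fin n) M) (p q i j : Fin n) :
    matAd a (matUnit A p q) i j = (if j = q then a i p else 0) - (if i = p then a q j else 0) := by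
  simp [matAd]

theorem trace_matAd_matUnit (a : Matrix (Fin n) (Fin n) M) (p q : Fin n) :
    (matAd a (matUnit A p q)).trace = 0 := by
  simp [Matrix.trace, matAd_matUnit_apply]

theorem isMatDerivation_matAd [NormedAlgebra ℂ A] [Module ℂ M] [SMulCommClass A Aᵐᵒᵖ M]
    [IsScalarTower ℂ A M] [IsScalarTower ℂ Aᵐᵒᵖ M] (a : Matrix (Fin n) (Fin n) M) :
    IsMatDerivation A M (matAd a) := by
  refine ⟨⟨fun x y => ?_, fun c x => ?_⟩, fun x y => ?_⟩
  · simp only [matAd, matR_add_right, matL_add_left]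
    abel
  · simp only [matAd, matR_smul_right, matL_smul_left, smul_sub]
  · simp only [matAd, matR_sub_left, matL_sub_right, matR_matR, matL_matR, matL_mul]
    abel

end

section

variable {A M : Type*} [NormedRing A] [NormedAlgebra ℂ A] [AddCommGroup M] [Module ℂ M]
  [Module A M] [Module Aᵐᵒᵖ M] {n : ℕ} {D : Matrix (Fin n) (Fin n) A → Matrix (Fin n) (Fin n) M}

theorem IsMatDerivation.eq_matAd_matUnit [NeZero n] (hD : IsMatDerivation A M D) (p q : Fin n) :
    D (matUnit A p q) = matAd (Matrix.of fun i j => D (matUnit A j 0) i 0) (matUnit A p q) := by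
  ext i j
  have leibniz := congrFun (congrFun (hD.2 (matUnit A p q) (matUnit A j 0)) i) 0
  simp only [matUnit_mul_matUnit, Matrix.add_apply, matR_matUnit_apply, matL_matUnit_apply,
    ↓reduceIte] at leibniz
  rw [matAd_matUnit_apply, Matrix.of_apply, Matrix.of_apply, eq_sub_iff_add_eq, ← leibniz]
  by_cases hqj : q = j
  · simp [hqj]
  · simp [hqj, Ne.symm hqj, hD.1.map_zero]

theorem IsMatDerivation.trace_eq_zero [NeZero n] (hD : IsMatDerivation A M D)
    {t : Matrix (Fin n) (Fin n) A} (ht : t ∈ unitSpan A n) : (D t).trace = 0 := by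
  have hker : unitSpan A n ≤ LinearMap.ker ((Matrix.traceLinearMap (Fin n) ℂ M).comp (hD.1.mk' D)) :=
    Submodule.span_le.2 <| by
      rintro _ ⟨⟨p, q⟩, rfl⟩
      exact (congrArg trace (hD.eq_matAd_matUnit p q)).trans (trace_matAd_matUnit _ p q)
  exact hker ht

theorem IsMatDerivation.trace_matR_add_trace_matL [NeZero n] (hD : IsMatDerivation A M D)
    {x y : Matrix (Fin n) (Fin n) A} (hxy : x * y ∈ unitSpan A n) :
    (matR A M (D x) y).trace + (matL A M x (D y)).trace = 0 := by
  rw [← Matrix.trace_add, ← hD.2]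
  exact hD.trace_eq_zero hxy

theorem IsMatDerivation.exists_eqOn_unitSpan [NeZero n] [SMulCommClass A Aᵐᵒᵖ M]
    [IsScalarTower ℂ A M] [IsScalarTower ℂ Aᵐᵒᵖ M] (hD : IsMatDerivation A M D) :
    ∃ a, Set.EqOn D (matAd a) (unitSpan A n) := by
  set a : Matrix (Fin n) (Fin n) M := Matrix.of fun i j => D (matUnit A j 0) i 0
  refine ⟨a, LinearMap.eqOn_span' (f := hD.1.mk' D) (g := (isMatDerivation_matAd a).1.mk' _) ?_⟩
  rintro _ ⟨⟨p, q⟩, rfl⟩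
  exact hD.eq_matAd_matUnit p q

theorem IsMatDerivation.is2Local (hD : IsMatDerivation A M D) : Is2LocalMatDerivation A M D :=
  fun _ _ => ⟨D, hD, rfl, rfl⟩

end

namespace Is2LocalMatDerivation

variable {A M : Type*} [NormedRing A] [NormedAlgebra ℂ A] [AddCommGroup M] [Module ℂ M]
  [Module A M] [Module Aᵐᵒᵖ M] {n : ℕ} [NeZero n]
  {Δ : Matrix (Fin n) (Fin n) A → Matrix (Fin n) (Fin n) M}

theorem apply_eq_neg_trace (hΔ : Is2LocalMatDerivation A M Δ) {t : Matrix (Fin n) (Fin n) A}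
    (ht : t ∈ unitSpan A n) (i j : Fin n) :
    Δ t i j = -(matL A M t (Δ (matUnit A j i))).trace := by
  obtain ⟨D, hD, hDt, hDe⟩ := hΔ t (matUnit A j i)
  have h := hD.trace_matR_add_trace_matL (mul_matUnit_mem_unitSpan ht j i)
  rw [trace_matR_matUnit, ← hDt, ← hDe] at h
  exact eq_neg_of_add_eq_zero_left h

theorem map_add (hΔ : Is2LocalMatDerivation A M Δ) {x y : Matrix (Fin n) (Fin n) A}
    (hx : x ∈ unitSpan A n) (hy : y ∈ unitSpan A n) : Δ (x + y) = Δ x + Δ y := by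
  ext i j
  simp only [Matrix.add_apply, hΔ.apply_eq_neg_trace (add_mem hx hy), hΔ.apply_eq_neg_trace hx,
    hΔ.apply_eq_neg_trace hy, matL_add_left, Matrix.trace_add, neg_add]

variable [SMulCommClass A Aᵐᵒᵖ M] [IsScalarTower ℂ A M] [IsScalarTower ℂ Aᵐᵒᵖ M]

theorem exists_matAd_eq (hΔ : Is2LocalMatDerivation A M Δ) {x y : Matrix (Fin n) (Fin n) A}
    (hx : x ∈ unitSpan A n) (hy : y ∈ unitSpan A n) :
    ∃ a, Δ x = matAd a x ∧ Δ y = matAd a y := by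
  obtain ⟨D, hD, hDx, hDy⟩ := hΔ x y
  obtain ⟨a, ha⟩ := hD.exists_eqOn_unitSpan
  exact ⟨a, hDx.trans (ha hx), hDy.trans (ha hy)⟩

theorem apply_matUnit_apply_of_ne_of_ne (hΔ : Is2LocalMatDerivation A M Δ) {p q i j : Fin n}
    (hi : i ≠ p) (hj : j ≠ q) : Δ (matUnit A p q) i j = 0 := by
  obtain ⟨a, ha, -⟩ := hΔ.exists_matAd_eq (matUnit_mem_unitSpan p q) (matUnit_mem_unitSpan p q)
  simp [ha, matAd_matUnit_apply, hi, hj]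

theorem apply_matUnit_self_apply_self (hΔ : Is2LocalMatDerivation A M Δ) (p : Fin n) :
    Δ (matUnit A p p) p p = 0 := by
  obtain ⟨a, ha, -⟩ := hΔ.exists_matAd_eq (matUnit_mem_unitSpan p p) (matUnit_mem_unitSpan p p)
  simp [ha, matAd_matUnit_apply]

theorem apply_matUnit_apply_col (hΔ : Is2LocalMatDerivation A M Δ) {p i : Fin n} (hi : i ≠ p)
    (q r : Fin n) : Δ (matUnit A p q) i q = Δ (matUnit A p r) i r := by
  obtain ⟨a, ha, ha'⟩ :=
    hΔ.exists_matAd_eq (matUnit_mem_unitSpan p q) (matUnit_mem_unitSpan p r)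
  simp [ha, ha', matAd_matUnit_apply, hi]

theorem apply_matUnit_apply_row (hΔ : Is2LocalMatDerivation A M Δ) {q j : Fin n} (hj : j ≠ q)
    (p r : Fin n) : Δ (matUnit A p q) p j = -Δ (matUnit A j r) q r := by
  obtain ⟨a, ha, ha'⟩ :=
    hΔ.exists_matAd_eq (matUnit_mem_unitSpan p q) (matUnit_mem_unitSpan j r)
  simp [ha, ha', matAd_matUnit_apply, hj, Ne.symm hj]

theorem apply_matUnit_diag_add (hΔ : Is2LocalMatDerivation A M Δ) {p q r : Fin n}
    (hpq : p ≠ q) (hqr : q ≠ r) :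
    Δ (matUnit A p q) p q + Δ (matUnit A q r) q r = Δ (matUnit A p r) p r := by
  have hpq_mem := matUnit_mem_unitSpan (A := A) p q
  have hqr_mem := matUnit_mem_unitSpan (A := A) q r
  obtain ⟨a, ha, ha'⟩ := hΔ.exists_matAd_eq (add_mem hpq_mem hqr_mem) (matUnit_mem_unitSpan p r)
  rw [hΔ.map_add hpq_mem hqr_mem, (isMatDerivation_matAd a).1.map_add] at ha
  have e₁ : Δ (matUnit A p q) p q = a p p - a q q := by
    simpa [hΔ.apply_matUnit_apply_of_ne_of_ne hpq hqr, matAd_matUnit_apply, hpq, hqr]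
      using congrFun (congrFun ha p) q
  have e₂ : Δ (matUnit A q r) q r = a q q - a r r := by
    simpa [hΔ.apply_matUnit_apply_of_ne_of_ne hpq.symm hqr.symm, matAd_matUnit_apply, hpq.symm,
      hqr.symm] using congrFun (congrFun ha q) r
  simp [e₁, e₂, ha', matAd_matUnit_apply]

theorem apply_matUnit_diag (hΔ : Is2LocalMatDerivation A M Δ) (p q r : Fin n) :
    Δ (matUnit A p q) p q = Δ (matUnit A p r) p r - Δ (matUnit A q r) q r := by
  rcases eq_or_ne p q with rfl | hpq
  · rw [sub_self, hΔ.apply_matUnit_self_apply_self]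
  rcases eq_or_ne q r with rfl | hqr
  · rw [hΔ.apply_matUnit_self_apply_self, sub_zero]
  rw [← hΔ.apply_matUnit_diag_add hpq hqr, add_sub_cancel_right]

theorem exists_matAd_eq_matUnit (hΔ : Is2LocalMatDerivation A M Δ) :
    ∃ a, ∀ p q, Δ (matUnit A p q) = matAd a (matUnit A p q) := by
  refine ⟨Matrix.of fun i j => Δ (matUnit A j 0) i 0, fun p q => ?_⟩
  ext i j
  rw [matAd_matUnit_apply]
  rcases eq_or_ne i p with rfl | hi <;> rcases eq_or_ne j q with rfl | hj
  · simpa using hΔ.apply_matUnit_diag i j 0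
  · simpa [hj] using hΔ.apply_matUnit_apply_row hj i 0
  · simpa [hi] using hΔ.apply_matUnit_apply_col hi j 0
  · simpa [hi, hj] using hΔ.apply_matUnit_apply_of_ne_of_ne hi hj

end Is2LocalMatDerivation

/-- for every 2-local derivation `Δ : Mₙ(A) → Mₙ(M)` (`n ≥ 2`) there is a
derivation `D` agreeing with `Δ` on the linear span of the matrix units. -/
theorem exists_derivation_eq_on_matrixUnits (n : ℕ) (hn : 2 ≤ n)
    (Δ : Matrix (Fin n) (Fin n) A → Matrix (Fin n) (Fin n) M)
    (hΔ : Is2LocalMatDerivation A M Δ) :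
    ∃ D : Matrix (Fin n) (Fin n) A → Matrix (Fin n) (Fin n) M,
      IsMatDerivation A M D ∧ ∀ t ∈ unitSpan A n, Δ t = D t := by
  have : NeZero n := ⟨by omega⟩
  obtain ⟨a, ha⟩ := hΔ.exists_matAd_eq_matUnit
  have hD := isMatDerivation_matAd (A := A) a
  refine ⟨matAd a, hD, fun t ht => ?_⟩
  ext i j
  rw [hΔ.apply_eq_neg_trace ht, hD.is2Local.apply_eq_neg_trace ht, ha]
end

section
/- Let A be a unital complex Banach algebra with property (J), M a unital A-bimodule, n ≥ 3, and let Δ be a 2-local derivation from M_n(A) into M_n(M) that vanishes on the linear span of the matrix units {e_{ij}}_{i,j=1}^n. Then for every i with 1 ≤ i ≤ n, the restriction Δ_{ii} of Δ to A_{ii} = e_{ii} M_n(A) e_{ii} is a derivation from A_{ii} into e_{ii} M_n(M) e_{ii}: it is linear and satisfies Δ(xy) = Δ(x)y + xΔ(y) for all x, y ∈ A_{ii}. -/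
open MulOpposite Matrix

variable (A M : Type*) [NormedRing A] [NormedAlgebra ℂ A] [CompleteSpace A]
  [AddCommGroup M] [Module ℂ M] [Module A M] [Module Aᵐᵒᵖ M]
  [SMulCommClass A Aᵐᵒᵖ M] [IsScalarTower ℂ A M] [IsScalarTower ℂ Aᵐᵒᵖ M]

variable {n : ℕ}

/-- A Jordan derivation from `A` into the `A`-bimodule `N`: a `ℂ`-linear map with
`D (x²) = D x · x + x · D x`. -/
def IsJordanDerivation (D : A → M) : Prop :=
  IsLinearMap ℂ D ∧ ∀ x : A, D (x * x) = op x • D x + x • D x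

universe u v

/-- Property (J): any Jordan derivation from the algebra `A` into any
`A`-bimodule is a derivation. -/
def PropertyJ (A : Type u) [NormedRing A] [NormedAlgebra ℂ A] [CompleteSpace A] : Prop :=
  ∀ (N : Type v) [AddCommGroup N] [Module ℂ N] [Module A N] [Module Aᵐᵒᵖ N]
    [SMulCommClass A Aᵐᵒᵖ N] [IsScalarTower ℂ A N] [IsScalarTower ℂ Aᵐᵒᵖ N]
    (D : A → N), IsJordanDerivation A N D → IsDerivation A N D


/-!
Fix `i`, some `j ≠ i`, and put `f a = Δ(a e_ii)_ii`. Evaluating one derivation at `u` and `v`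
shows that `Δ(u)_pq` depends only on row `p` and column `q` of `u`. For `τ = a e_ij + b e_ji` we
have `τ² = ab e_ii + ba e_jj`, so 2-locality at `τ, τ²` gives
`f(ab) = Δ(a e_ij)_ij b + a Δ(b e_ji)_ji`; as `Δ` kills `e_ij` and `e_ji`, the two terms on the
right are `f(a) b` and `a f(b)`. Every derivation kills the `(i,i)` entry of its value at `e_ii`,
so `f(a + λ) = f(a)`. Together with the Leibniz rule this gives `f(a + u) = f(a) + f(u)` for
invertible `u`, writing `a + u = (a u⁻¹ + 1) u`, and in a Banach algebra every `b` is a scalar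
plus an invertible element. Finally a derivation agreeing with `Δ` at `a e_ii` and at `e_ii`
(where `Δ` vanishes) maps the corner into itself, so `Δ(a e_ii) = f(a) e_ii`.
-/

theorem map_add_of_leibniz {𝕜 R N : Type*} [NontriviallyNormedField 𝕜] [NormedRing R]
    [NormedAlgebra 𝕜 R] [CompleteSpace R] [AddCommGroup N] [Module R N] [Module Rᵐᵒᵖ N]
    {f : R → N} (hmul : ∀ a b, f (a * b) = op b • f a + a • f b)
    (hshift : ∀ (a : R) (c : 𝕜), f (a + algebraMap 𝕜 R c) = f a) (a b : R) :
    f (a + b) = f a + f b := by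
  have add_unit : ∀ x u : R, IsUnit u → f (x + u) = f x + f u := by
    rintro x _ ⟨u, rfl⟩
    have hsplit : x + u = (x * ↑u⁻¹ + algebraMap 𝕜 R 1) * u := by
      rw [map_one, add_mul, one_mul, Units.inv_mul_cancel_right]
    calc f (x + u) = op (u : R) • f (x * ↑u⁻¹) + (x * ↑u⁻¹ + algebraMap 𝕜 R 1) • f u := by
          rw [hsplit, hmul, hshift]
      _ = f (x * ↑u⁻¹ * u) + f u := by
          rw [hmul (x * ↑u⁻¹) u, map_one, add_smul, one_smul, add_assoc]
      _ = f x + f u := by rw [Units.inv_mul_cancel_right]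
  obtain ⟨k, hk⟩ := NormedField.exists_lt_norm 𝕜 (‖b‖ * ‖(1 : R)‖)
  have hunit : IsUnit (-(algebraMap 𝕜 R k - b)) :=
    (spectrum.mem_resolventSet_iff.mp (spectrum.mem_resolventSet_of_norm_lt_mul hk)).neg
  have hb : b = -(algebraMap 𝕜 R k - b) + algebraMap 𝕜 R k := by abel
  calc f (a + b) = f (a + algebraMap 𝕜 R k + -(algebraMap 𝕜 R k - b)) := by
        congr 1; abel
    _ = f a + f b := by rw [add_unit _ _ hunit, hshift, hb, hshift, ← hb]

section

variable {R N : Type*} [NormedRing R] [AddCommGroup N]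

section

variable [Module R N]

theorem matL_zero_right (x : Matrix (Fin n) (Fin n) R) : matL R N x 0 = 0 := by
  ext p q
  simp [matL]

theorem matL_single_apply (k l : Fin n) (a : R) (Y : Matrix (Fin n) (Fin n) N) (p q : Fin n) :
    matL R N (single k l a) Y p q = if p = k then a • Y l q else 0 := by
  simp [matL, single_apply, ite_and, eq_comm]

theorem matL_single_single (i j k : Fin n) (a : R) (Q : N) :
    matL R N (single i j a) (single j k Q) = single i k (a • Q) := by
  ext p q
  simp [matL_single_apply, single_apply, eq_comm, ite_and]

end

section

variable [Module Rᵐᵒᵖ N]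

theorem matR_zero_left (x : Matrix (Fin n) (Fin n) R) : matR R N 0 x = 0 := by
  ext p q
  simp [matR]

theorem matR_single_apply (Y : Matrix (Fin n) (Fin n) N) (k l : Fin n) (b : R) (p q : Fin n) :
    matR R N Y (single k l b) p q = if q = l then op b • Y p k else 0 := by
  rcases eq_or_ne q l with rfl | hq
  · simp [matR, single_apply, apply_ite op]
  · simp [matR, single_apply, hq, hq.symm]

theorem matR_single_single (i j k : Fin n) (P : N) (b : R) :
    matR R N (single i j P) (single j k b) = single i k (op b • P) := by
  ext p q
  rw [matR_single_apply, single_apply, single_apply]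
  split_ifs <;> simp_all

end

theorem matL_single_matR_single [Module R N] [Module Rᵐᵒᵖ N] (Y : Matrix (Fin n) (Fin n) N)
    (p q : Fin n) :
    matL R N (single p p 1) (matR R N Y (single q q 1)) = single p q (Y p q) := by
  ext r s
  simp [matL_single_apply, matR_single_apply, single_apply, eq_comm, ite_and]

end

def cornerMap {R N : Type*} [Zero R] (Δ : Matrix (Fin n) (Fin n) R → Matrix (Fin n) (Fin n) N)
    (i : Fin n) (a : R) : N :=
  Δ (single i i a) i i

section

variable {R N : Type*} [NormedRing R] [NormedAlgebra ℂ R] [AddCommGroup N] [Module ℂ N]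
  [Module R N] [Module Rᵐᵒᵖ N]

namespace IsMatDerivation

variable {D : Matrix (Fin n) (Fin n) R → Matrix (Fin n) (Fin n) N}

theorem map_mul_mul_of_map_eq_zero (hD : IsMatDerivation R N D)
    {P Q : Matrix (Fin n) (Fin n) R} (hP : D P = 0) (hQ : D Q = 0)
    (y : Matrix (Fin n) (Fin n) R) :
    D (P * y * Q) = matL R N P (matR R N (D y) Q) := by
  rw [mul_assoc, hD.2, hD.2, hP, hQ, matR_zero_left, matL_zero_right, zero_add, add_zero]

theorem map_single_one_apply_self (hD : IsMatDerivation R N D) (q : Fin n) :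
    D (single q q 1) q q = 0 := by
  have h := congrFun (congrFun (hD.2 (single q q 1) (single q q 1)) q) q
  rw [single_mul_single_same, one_mul, Matrix.add_apply, matR_single_apply,
    matL_single_apply] at h
  simpa using h

theorem apply_eq_zero_of_row_col (hD : IsMatDerivation R N D) {w : Matrix (Fin n) (Fin n) R}
    {p q : Fin n} (hrow : ∀ k, w p k = 0) (hcol : ∀ k, w k q = 0) : D w p q = 0 := by
  have hwq : w * single q q 1 = 0 := by
    ext r s
    rcases eq_or_ne s q with rfl | hs
    · simp [hcol]
    · simp [hs]
  have h := congrFun (congrFun (hD.2 w (single q q 1)) p) q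
  rw [hwq, hD.1.map_zero, Matrix.add_apply, matR_single_apply] at h
  simpa [matL, hrow] using h.symm

end IsMatDerivation

namespace Is2LocalMatDerivation

variable {Δ : Matrix (Fin n) (Fin n) R → Matrix (Fin n) (Fin n) N}

theorem map_smul (hΔ : Is2LocalMatDerivation R N Δ) (c : ℂ) (x : Matrix (Fin n) (Fin n) R) :
    Δ (c • x) = c • Δ x := by
  obtain ⟨D, hD, hx, hcx⟩ := hΔ x (c • x)
  rw [hcx, hD.1.map_smul, hx]

theorem map_mul_self (hΔ : Is2LocalMatDerivation R N Δ) (x : Matrix (Fin n) (Fin n) R) :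
    Δ (x * x) = matR R N (Δ x) x + matL R N x (Δ x) := by
  obtain ⟨D, hD, hx, hxx⟩ := hΔ x (x * x)
  rw [hxx, hD.2, hx]

theorem apply_eq_of_row_col (hΔ : Is2LocalMatDerivation R N Δ)
    {u v : Matrix (Fin n) (Fin n) R} {p q : Fin n}
    (hrow : ∀ k, u p k = v p k) (hcol : ∀ k, u k q = v k q) : Δ u p q = Δ v p q := by
  obtain ⟨D, hD, hu, hv⟩ := hΔ u v
  have h := hD.apply_eq_zero_of_row_col (w := u - v) (p := p) (q := q)
    (fun k => sub_eq_zero.2 (hrow k)) (fun k => sub_eq_zero.2 (hcol k))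
  rwa [hD.1.map_sub, Matrix.sub_apply, sub_eq_zero, ← hu, ← hv] at h

theorem apply_single_eq_single (hΔ : Is2LocalMatDerivation R N Δ) {i : Fin n}
    (hi : Δ (single i i 1) = 0) (a : R) :
    Δ (single i i a) = single i i (cornerMap Δ i a) := by
  obtain ⟨D, hD, ha, he⟩ := hΔ (single i i a) (single i i 1)
  have h := hD.map_mul_mul_of_map_eq_zero (he ▸ hi) (he ▸ hi) (single i i a)
  rwa [single_mul_mul_single, one_mul, mul_one, single_apply_same, matL_single_matR_single,
    ← ha] at h

theorem cornerMap_add_algebraMap (hΔ : Is2LocalMatDerivation R N Δ) (i : Fin n) (a : R)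
    (c : ℂ) : cornerMap Δ i (a + algebraMap ℂ R c) = cornerMap Δ i a := by
  obtain ⟨D, hD, hc, ha⟩ := hΔ (single i i (a + algebraMap ℂ R c)) (single i i a)
  have h : single i i (a + algebraMap ℂ R c) = single i i a + c • single i i 1 := by
    rw [single_add, smul_single, Algebra.algebraMap_eq_smul_one]
  rw [cornerMap, cornerMap, hc, ha, h, hD.1.map_add, hD.1.map_smul, Matrix.add_apply,
    Matrix.smul_apply, hD.map_single_one_apply_self, smul_zero, add_zero]

theorem cornerMap_mul_eq_offDiag (hΔ : Is2LocalMatDerivation R N Δ) {i j : Fin n}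
    (hij : i ≠ j) (a b : R) :
    cornerMap Δ i (a * b) = op b • Δ (single i j a) i j + a • Δ (single j i b) j i := by
  set τ := single i j a + single j i b
  have hτ : τ * τ = single i i (a * b) + single j j (b * a) := by
    simp [τ, add_mul, mul_add, hij, hij.symm, add_comm]
  have hsq : Δ (τ * τ) i i = Δ (single i i (a * b)) i i :=
    hΔ.apply_eq_of_row_col (by simp [hτ, hij.symm]) (by simp [hτ, hij.symm])
  have hij_entry : Δ τ i j = Δ (single i j a) i j :=
    hΔ.apply_eq_of_row_col (by simp [τ, hij.symm]) (by simp [τ, hij])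
  have hji_entry : Δ τ j i = Δ (single j i b) j i :=
    hΔ.apply_eq_of_row_col (by simp [τ, hij]) (by simp [τ, hij.symm])
  have hR : matR R N (Δ τ) τ i i = op b • Δ τ i j := by
    simp [matR, τ, single_apply, hij.symm, apply_ite op]
  have hL : matL R N τ (Δ τ) i i = a • Δ τ j i := by
    simp [matL, τ, single_apply, hij.symm]
  rw [cornerMap, ← hsq, hΔ.map_mul_self, Matrix.add_apply, hR, hL, hij_entry, hji_entry]

theorem cornerMap_mul (hΔ : Is2LocalMatDerivation R N Δ) (hvan : ∀ p q, Δ (single p q 1) = 0)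
    {i j : Fin n} (hij : i ≠ j) (a b : R) :
    cornerMap Δ i (a * b) = op b • cornerMap Δ i a + a • cornerMap Δ i b := by
  have hij_entry : Δ (single i j a) i j = cornerMap Δ i a := by
    simpa [hvan] using (hΔ.cornerMap_mul_eq_offDiag hij a 1).symm
  have hji_entry : Δ (single j i b) j i = cornerMap Δ i b := by
    simpa [hvan] using (hΔ.cornerMap_mul_eq_offDiag hij 1 b).symm
  rw [hΔ.cornerMap_mul_eq_offDiag hij, hij_entry, hji_entry]

theorem cornerMap_add [CompleteSpace R] (hΔ : Is2LocalMatDerivation R N Δ)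
    (hvan : ∀ p q, Δ (single p q 1) = 0) {i j : Fin n} (hij : i ≠ j) (a b : R) :
    cornerMap Δ i (a + b) = cornerMap Δ i a + cornerMap Δ i b :=
  map_add_of_leibniz (hΔ.cornerMap_mul hvan hij) (hΔ.cornerMap_add_algebraMap i) a b

end Is2LocalMatDerivation

end

theorem twoLocal_corner_derivation (n : ℕ) (hn : 3 ≤ n)
    (Δ : Matrix (Fin n) (Fin n) A → Matrix (Fin n) (Fin n) M)
    (hΔ : Is2LocalMatDerivation A M Δ)
    (hvan : ∀ t ∈ unitSpan A n, Δ t = 0) :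
    ∀ i : Fin n,
      (∀ x y : Matrix (Fin n) (Fin n) A,
        x = matUnit A i i * x * matUnit A i i →
        y = matUnit A i i * y * matUnit A i i →
        Δ (x + y) = Δ x + Δ y) ∧
      (∀ (c : ℂ) (x : Matrix (Fin n) (Fin n) A),
        x = matUnit A i i * x * matUnit A i i →
        Δ (c • x) = c • Δ x) ∧
      (∀ x y : Matrix (Fin n) (Fin n) A,
        x = matUnit A i i * x * matUnit A i i →
        y = matUnit A i i * y * matUnit A i i →
        Δ (x * y) = matR A M (Δ x) y + matL A M x (Δ y)) := by
  intro i
  obtain ⟨j, hji⟩ := Fintype.exists_ne_of_one_lt_card (by rw [Fintype.card_fin]; omega) i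
  have hunits : ∀ p q, Δ (single p q 1) = 0 := fun p q =>
    hvan _ (Submodule.subset_span ⟨(p, q), rfl⟩)
  have hcorner : ∀ x, x = matUnit A i i * x * matUnit A i i → ∃ a, x = single i i a := by
    intro x hx
    rw [matUnit, single_mul_mul_single, one_mul, mul_one] at hx
    exact ⟨_, hx⟩
  have hΔcorner := hΔ.apply_single_eq_single (hunits i i)
  refine ⟨fun x y hx hy => ?_, fun c x _ => hΔ.map_smul c x, fun x y hx hy => ?_⟩
  · obtain ⟨a, rfl⟩ := hcorner x hx
    obtain ⟨b, rfl⟩ := hcorner y hy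
    rw [← single_add, hΔcorner, hΔcorner, hΔcorner, hΔ.cornerMap_add hunits hji.symm,
      single_add]
  · obtain ⟨a, rfl⟩ := hcorner x hx
    obtain ⟨b, rfl⟩ := hcorner y hy
    rw [single_mul_single_same, hΔcorner, hΔcorner, hΔcorner, hΔ.cornerMap_mul hunits hji.symm,
      single_add, matR_single_single, matL_single_single]
end

section
/- Let A be a unital complex Banach algebra, M a unital A-bimodule, n ≥ 3, and let Δ be a 2-local derivation from M_n(A) into M_n(M) that vanishes on the set D_n(A) of diagonal matrices and on the linear span of the matrix units {e_{ij}}_{i,j=1}^n. Then for every x ∈ M_n(A) and every k with 1 ≤ k ≤ n, the (k,k)-entry of Δ(x) is zero: Δ(x)_{kk} = 0. -/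
/-!
Fix `x` and `k`, write `E = e_kk`, and pick `c ∈ ℂ` outside the spectrum of `x_kk`, so that
`u = c - x_kk` is invertible. Take a derivation `D` agreeing with `Δ` at `x` and at the diagonal
matrix `uE`, where it therefore vanishes. Leibniz on `(uE)E = E(uE) = uE`, together with the
invertibility of `u`, kills the `k`-th row and column of `D(E)`. Since `ExE = cE - uE`, we get
`D(ExE) = c D(E)`, and expanding `D(E(xE))` and then `D(xE)` by Leibniz at the `(k,k)` entry
leaves `D(x)_kk = 0`.
-/

open MulOpposite Matrix

variable (A M : Type*) [NormedRing A] [NormedAlgebra ℂ A] [CompleteSpace A]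
  [AddCommGroup M] [Module ℂ M] [Module A M] [Module Aᵐᵒᵖ M]
  [SMulCommClass A Aᵐᵒᵖ M] [IsScalarTower ℂ A M] [IsScalarTower ℂ Aᵐᵒᵖ M]

variable {n : ℕ}

section MatrixActions

variable {A M : Type*} [NormedRing A] [AddCommGroup M]

theorem single_mem_diagSet (k : Fin n) (a : A) : single k k a ∈ diagSet A n :=
  fun _ _ hij => single_apply_of_ne _ _ _ _ _ fun h => hij (h.1.symm.trans h.2)

theorem matL_single_apply_row [Module A M] (k j : Fin n) (a : A) (Y : Matrix (Fin n) (Fin n) M) :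
    matL A M (single k k a) Y k j = a • Y k j := by
  simp [matL, single_apply]

theorem matR_single_apply_col [Module Aᵐᵒᵖ M] (i k : Fin n) (Y : Matrix (Fin n) (Fin n) M)
    (a : A) : matR A M Y (single k k a) i k = op a • Y i k := by
  simp [matR, single_apply, apply_ite op]

theorem matL_apply_eq_zero [Module A M] {Y : Matrix (Fin n) (Fin n) M} {j : Fin n}
    (hY : ∀ p, Y p j = 0) (x : Matrix (Fin n) (Fin n) A) (i : Fin n) : matL A M x Y i j = 0 := by
  simp [matL, hY]

theorem matR_apply_eq_zero [Module Aᵐᵒᵖ M] {Y : Matrix (Fin n) (Fin n) M} {i : Fin n}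
    (hY : ∀ p, Y i p = 0) (x : Matrix (Fin n) (Fin n) A) (j : Fin n) : matR A M Y x i j = 0 := by
  simp [matR, hY]

end MatrixActions

theorem exists_isUnit_algebraMap_sub {𝕜 A : Type*} [NontriviallyNormedField 𝕜] [NormedRing A]
    [NormedAlgebra 𝕜 A] [CompleteSpace A] (a : A) : ∃ c : 𝕜, IsUnit (algebraMap 𝕜 A c - a) := by
  obtain ⟨c, hc⟩ := NormedField.exists_lt_norm 𝕜 (‖a‖ * ‖(1 : A)‖)
  exact ⟨c, spectrum.mem_resolventSet_of_norm_lt_mul hc⟩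

namespace IsMatDerivation

variable {A M : Type*} [NormedRing A] [NormedAlgebra ℂ A] [AddCommGroup M] [Module ℂ M]
  [Module A M] [Module Aᵐᵒᵖ M] {D : Matrix (Fin n) (Fin n) A → Matrix (Fin n) (Fin n) M}
  (hD : IsMatDerivation A M D) {k : Fin n} {u : A}
include hD

theorem apply_single_one_row_eq_zero (hu : IsUnit u) (hDu : D (single k k u) = 0) (j : Fin n) :
    D (single k k 1) k j = 0 := by
  have h := congrFun₂ (hD.2 (single k k u) (single k k 1)) k j
  rw [single_mul_single_same, mul_one, hDu, Matrix.zero_apply, Matrix.add_apply,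
    matR_apply_eq_zero (fun _ => rfl), matL_single_apply_row, zero_add] at h
  exact hu.smul_eq_zero.mp h.symm

theorem apply_single_one_col_eq_zero (hu : IsUnit u) (hDu : D (single k k u) = 0) (i : Fin n) :
    D (single k k 1) i k = 0 := by
  have h := congrFun₂ (hD.2 (single k k 1) (single k k u)) i k
  rw [single_mul_single_same, one_mul, hDu, Matrix.zero_apply, Matrix.add_apply,
    matL_apply_eq_zero (fun _ => rfl), matR_single_apply_col, add_zero] at h
  exact hu.op.smul_eq_zero.mp h.symm

theorem apply_diag_entry_eq_zero {x : Matrix (Fin n) (Fin n) A} (c : ℂ)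
    (hu : IsUnit (algebraMap ℂ A c - x k k))
    (hDu : D (single k k (algebraMap ℂ A c - x k k)) = 0) : D x k k = 0 := by
  set E : Matrix (Fin n) (Fin n) A := single k k 1
  have hrow := hD.apply_single_one_row_eq_zero hu hDu
  have hcol := hD.apply_single_one_col_eq_zero hu hDu
  have hcorner : E * (x * E) = c • E - single k k (algebraMap ℂ A c - x k k) := by
    rw [eq_sub_iff_add_eq, ← mul_assoc, single_mul_mul_single, one_mul, mul_one, ← single_add,
      add_sub_cancel, smul_single, Algebra.algebraMap_eq_smul_one]
  have hDcorner : D (E * (x * E)) = c • D E := by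
    rw [hcorner, hD.1.map_sub, hD.1.map_smul, hDu, sub_zero]
  have hxE : D (x * E) k k = 0 := by
    have h := congrFun₂ (hD.2 E (x * E)) k k
    rw [hDcorner, Matrix.smul_apply, hrow, smul_zero, Matrix.add_apply, matR_apply_eq_zero hrow,
      matL_single_apply_row, one_smul, zero_add] at h
    exact h.symm
  have h := congrFun₂ (hD.2 x E) k k
  rw [Matrix.add_apply, matR_single_apply_col, matL_apply_eq_zero hcol, op_one, one_smul,
    add_zero] at h
  rw [← h, hxE]

end IsMatDerivation

theorem twoLocal_diagonal_entries_zero (n : ℕ)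
    (Δ : Matrix (Fin n) (Fin n) A → Matrix (Fin n) (Fin n) M)
    (hΔ : Is2LocalMatDerivation A M Δ)
    (hdiag : ∀ x ∈ diagSet A n, Δ x = 0) :
    ∀ (x : Matrix (Fin n) (Fin n) A) (k : Fin n), Δ x k k = 0 := by
  intro x k
  obtain ⟨c, hc⟩ := exists_isUnit_algebraMap_sub (𝕜 := ℂ) (x k k)
  set y := single k k (algebraMap ℂ A c - x k k)
  obtain ⟨D, hD, hDx, hDy⟩ := hΔ x y
  rw [hDx]
  exact hD.apply_diag_entry_eq_zero c hc (hDy ▸ hdiag y (single_mem_diagSet k _))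
end

section
/- Let A be a unital complex Banach algebra, M a unital A-bimodule, n ≥ 3, and let Δ be a 2-local derivation from M_n(A) into M_n(M) that vanishes on the set D_n(A) of diagonal matrices and on the linear span of the matrix units {e_{ij}}_{i,j=1}^n. If x ∈ M_n(A) is a matrix whose (k,s)-entry equals the unit e of A, then the (k,s)-entry of Δ(x) is zero: Δ(x)_{ks} = 0. -/
open MulOpposite Matrix

variable (A M : Type*) [NormedRing A] [NormedAlgebra ℂ A] [CompleteSpace A]
  [AddCommGroup M] [Module ℂ M] [Module A M] [Module Aᵐᵒᵖ M]
  [SMulCommClass A Aᵐᵒᵖ M] [IsScalarTower ℂ A M] [IsScalarTower ℂ Aᵐᵒᵖ M]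

variable {n : ℕ}

theorem matL_zero {R N : Type*} [NormedRing R] [AddCommGroup N] [Module R N] {n : ℕ}
    (x : Matrix (Fin n) (Fin n) R) : matL R N x 0 = 0 := by
  ext i j
  simp [matL]

theorem zero_matR {R N : Type*} [NormedRing R] [AddCommGroup N] [Module Rᵐᵒᵖ N] {n : ℕ}
    (x : Matrix (Fin n) (Fin n) R) : matR R N 0 x = 0 := by
  ext i j
  simp [matR]

theorem matR_matL_single_apply {R N : Type*} [NormedRing R] [AddCommGroup N] [Module R N]
    [Module Rᵐᵒᵖ N] {n : ℕ} (i j k l : Fin n) (a b : R) (Y : Matrix (Fin n) (Fin n) N) :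
    matR R N (matL R N (single i j a) Y) (single k l b) i l = op b • a • Y j k := by
  simp [matR, matL, single, apply_ite op, ite_smul, Finset.sum_ite_eq, ite_and]

theorem IsMatDerivation.map_mul_mul_of_map_eq_zero_s10 {R N : Type*} [NormedRing R]
    [NormedAlgebra ℂ R] [AddCommGroup N] [Module ℂ N] [Module R N] [Module Rᵐᵒᵖ N] {n : ℕ}
    {D : Matrix (Fin n) (Fin n) R → Matrix (Fin n) (Fin n) N} (hD : IsMatDerivation R N D)
    {x z : Matrix (Fin n) (Fin n) R} (hx : D x = 0) (hz : D z = 0)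
    (y : Matrix (Fin n) (Fin n) R) :
    D (x * y * z) = matR R N (matL R N x (D y)) z := by
  rw [hD.2, hD.2, hx, hz, zero_matR, zero_add, matL_zero, add_zero]

theorem twoLocal_unit_entry_zero (n : ℕ)
    (Δ : Matrix (Fin n) (Fin n) A → Matrix (Fin n) (Fin n) M)
    (hΔ : Is2LocalMatDerivation A M Δ)
    (hvan : ∀ t ∈ unitSpan A n, Δ t = 0) :
    ∀ (x : Matrix (Fin n) (Fin n) A) (k s : Fin n), x k s = 1 → Δ x k s = 0 := by
  intro x k s hxks
  set E := matUnit A s k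
  obtain ⟨D, hD, hDx, hDE⟩ := hΔ x E
  have hE : D E = 0 := hDE ▸ hvan E (Submodule.subset_span ⟨(s, k), rfl⟩)
  -- `E x E = x_{ks} E = E`
  have hExE : E * x * E = E := by simp [E, matUnit, hxks]
  calc Δ x k s = matR A M (matL A M E (D x)) E s k := by
        rw [hDx, show E = single s k 1 from rfl, matR_matL_single_apply, one_smul, op_one,
          one_smul]
    _ = D E s k := by rw [← hD.map_mul_mul_of_map_eq_zero_s10 hE hE, hExE]
    _ = 0 := by rw [hE]; rfl
end

section
/- Let A be a unital complex Banach algebra, M a unital A-bimodule, n ≥ 3, and let Δ be a 2-local derivation from M_n(A) into M_n(M) that vanishes on the set D_n(A) of diagonal matrices and on the linear span of the matrix units {e_{ij}}_{i,j=1}^n. Let k ≠ s and let x, y ∈ M_n(A) be matrices with x_{ij} = y_{ij} for all (i,j) ≠ (s,k). Then Δ(x)_{ks} = Δ(y)_{ks}. -/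
/-!
For the derivation `D` that agrees with `Δ` at `x` and `y`, linearity gives
`Δ x - Δ y = D z` with `z = x - y`. Since `z` is supported at `(s, k)`, `z = e_{ss} z`, and the
Leibniz rule gives `D z = D(e_{ss}) z + e_{ss} D(z)`. The `(k, s)` entry of the first term vanishes
because column `s` of `z` does, that of the second because row `k` of `e_{ss}` does.
-/

open MulOpposite Matrix

variable (A M : Type*) [NormedRing A] [NormedAlgebra ℂ A] [CompleteSpace A]
  [AddCommGroup M] [Module ℂ M] [Module A M] [Module Aᵐᵒᵖ M]
  [SMulCommClass A Aᵐᵒᵖ M] [IsScalarTower ℂ A M] [IsScalarTower ℂ Aᵐᵒᵖ M]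

variable {n : ℕ}

theorem Matrix.single_one_mul_of_forall_ne {ι R : Type*} [Fintype ι] [DecidableEq ι]
    [NonAssocSemiring R] {s : ι} {z : Matrix ι ι R} (hz : ∀ i j, i ≠ s → z i j = 0) :
    single s s 1 * z = z := by
  ext i j
  by_cases hi : i = s
  · subst hi
    simp
  · rw [single_mul_apply_of_ne _ _ _ _ _ hi, hz i j hi]

section

variable {A M : Type*} [NormedRing A] [AddCommGroup M] {n : ℕ}

theorem matR_apply_eq_zero_of_col_eq_zero [Module Aᵐᵒᵖ M] (Y : Matrix (Fin n) (Fin n) M)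
    {x : Matrix (Fin n) (Fin n) A} {j : Fin n} (hx : ∀ p, x p j = 0) (i : Fin n) :
    matR A M Y x i j = 0 := by
  simp [matR, hx]

theorem matL_apply_eq_zero_of_row_eq_zero [Module A M] (Y : Matrix (Fin n) (Fin n) M)
    {x : Matrix (Fin n) (Fin n) A} {i : Fin n} (hx : ∀ p, x i p = 0) (j : Fin n) :
    matL A M x Y i j = 0 := by
  simp [matL, hx]

variable [NormedAlgebra ℂ A] [Module ℂ M] [Module A M] [Module Aᵐᵒᵖ M]

theorem IsMatDerivation.map_sub {D : Matrix (Fin n) (Fin n) A → Matrix (Fin n) (Fin n) M}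
    (hD : IsMatDerivation A M D) (x y : Matrix (Fin n) (Fin n) A) : D (x - y) = D x - D y :=
  hD.1.map_sub x y

theorem IsMatDerivation.apply_eq_zero_of_row_support
    {D : Matrix (Fin n) (Fin n) A → Matrix (Fin n) (Fin n) M} (hD : IsMatDerivation A M D)
    {z : Matrix (Fin n) (Fin n) A} {s k : Fin n} (hrow : ∀ i j, i ≠ s → z i j = 0)
    (hss : z s s = 0) (hks : k ≠ s) :
    D z k s = 0 := by
  have hcol : ∀ p, z p s = 0 := fun p => by
    rcases eq_or_ne p s with rfl | hp
    · exact hss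
    · exact hrow p s hp
  rw [← Matrix.single_one_mul_of_forall_ne hrow, hD.2, Matrix.add_apply,
    matR_apply_eq_zero_of_col_eq_zero _ hcol,
    matL_apply_eq_zero_of_row_eq_zero _ (fun p => single_apply_of_row_ne hks.symm _ _ _), add_zero]

end

theorem twoLocal_entry_independent (n : ℕ)
    (Δ : Matrix (Fin n) (Fin n) A → Matrix (Fin n) (Fin n) M)
    (hΔ : Is2LocalMatDerivation A M Δ) :
    ∀ (k s : Fin n), k ≠ s →
      ∀ x y : Matrix (Fin n) (Fin n) A,
        (∀ i j : Fin n, (i, j) ≠ (s, k) → x i j = y i j) →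
        Δ x k s = Δ y k s := by
  intro k s hks x y hxy
  obtain ⟨D, hD, hx, hy⟩ := hΔ x y
  have hsupp : ∀ i j, (i, j) ≠ (s, k) → (x - y) i j = 0 := fun i j h =>
    sub_eq_zero.mpr (hxy i j h)
  have hzero : D (x - y) k s = 0 :=
    hD.apply_eq_zero_of_row_support (fun i j hi => hsupp i j (by simp [hi]))
      (hsupp s s (by simp [hks.symm])) hks
  rw [hD.map_sub, Matrix.sub_apply, sub_eq_zero] at hzero
  rw [hx, hy, hzero]
end
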